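/- Let A = P₁ − R₁ + S₁ be a double proper weak regular splitting and A = P₂ − R₂ + S₂ be a double proper regular splitting of a semi-monotone matrix A ∈ ℝ^{m×n}. Suppose N(S₂) = N(P₂), R(S₂) = R(P₂), I − S₂P₁† and I + R₂P₁† are nonsingular, Â† ≥ 0 and 𝒜̂† ≥ 0, where Â = (I − S₂P₁†)A and 𝒜̂ = (I + R₂P₁†)A. Setting P̂ = 𝒫̂ = P₂, R̂ = R₂ − S₂P₁†R₁ and ℛ̂ = R₂P₁†R₁ − S₂, if 𝒫̂†ℛ̂ ≥ P̂†R̂ and 𝒫̂†𝒜̂ ≥ P̂†Â, then ρ(𝒲₁₂) ≤ ρ(W₁₂) < 1. -/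

import Mathlib

open Matrix

/-- Spectral radius of a real square matrix: the maximum modulus of its complex eigenvalues. -/
noncomputable def specRad {ι : Type*} [Fintype ι] [DecidableEq ι] (M : Matrix ι ι ℝ) : ℝ :=
  sSup ((fun z : ℂ => ‖z‖) '' spectrum ℂ (M.map Complex.ofReal))

/-- `X` satisfies the four Penrose equations for `A`, i.e. `X` is the Moore-Penrose
inverse of `A`. -/
def IsMP {m n : ℕ} (A : Matrix (Fin m) (Fin n) ℝ) (X : Matrix (Fin n) (Fin m) ℝ) : Prop :=
  A * X * A = A ∧ X * A * X = X ∧ (A * X)ᵀ = A * X ∧ (X * A)ᵀ = X * A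

/-- Entrywise comparison of matrices: `MatLE A B` means `A ≤ B` entrywise. -/
def MatLE {m n : ℕ} (A B : Matrix (Fin m) (Fin n) ℝ) : Prop := ∀ i j, A i j ≤ B i j


/-!
Write `W₁₂ = [[B, C], [1, 0]]` and `𝒲₁₂ = [[B', C'], [1, 0]]`. All four blocks are nonnegative,
`B + C = P₂†N̂` and `B' + C' = P₂†𝒩̂` where `Â = P₂ - N̂` and `𝒜̂ = P₂ - 𝒩̂` with `N̂, 𝒩̂ ≥ 0`,
and the hypotheses say `B ≤ B'` and `B' + C' ≤ B + C`.

Convergence: `P₂` and `Â` have the same range and null space, so their Penrose projections agree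
and `P₂†N̂Â† = Â† - P₂†`. Hence `1 + Â†N̂ ≥ 1` is a right inverse of `1 - (B + C)`, and
`y = (1 + Â†N̂)𝟙 > 0` satisfies `(B + C)y = y - 𝟙 < y`. Then `(θy, y)` is a positive
super-eigenvector of `W₁₂` for some `θ < 1`, and the Collatz–Wielandt bound gives `ρ(W₁₂) < 1`.
Likewise `ρ(𝒲₁₂) < 1`.

Comparison: if `𝒲₁₂ v = z v`, the lower block row gives `|v| = (|z|u, u)`, and `|z| ≤ 1` yields
`|z| |v| ≤ 𝒲₁₂ |v| ≤ W₁₂ |v|`. By Gelfand's formula, a nonnegative matrix with a nonnegative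
sub-eigenvector for `|z|` has spectral radius at least `|z|`.
-/

open LinearMap (ker range)

section NonnegativeMatrix

variable {ι κ : Type*} [Fintype ι]

lemma Matrix.mulVec_nonneg_of_nonneg {M : Matrix κ ι ℝ} (hM : ∀ i j, 0 ≤ M i j) {v : ι → ℝ}
    (hv : 0 ≤ v) : 0 ≤ M *ᵥ v :=
  fun i => Finset.sum_nonneg fun j _ => mul_nonneg (hM i j) (hv j)

lemma Matrix.mulVec_mono_of_nonneg {M : Matrix κ ι ℝ} (hM : ∀ i j, 0 ≤ M i j) {v w : ι → ℝ}
    (hvw : v ≤ w) : M *ᵥ v ≤ M *ᵥ w := by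
  have := Matrix.mulVec_nonneg_of_nonneg hM (sub_nonneg.2 hvw)
  rwa [Matrix.mulVec_sub, sub_nonneg] at this

lemma Matrix.mulVec_le_mulVec_of_le {M N : Matrix κ ι ℝ} (hMN : ∀ i j, M i j ≤ N i j)
    {v : ι → ℝ} (hv : 0 ≤ v) : M *ᵥ v ≤ N *ᵥ v :=
  fun i => Finset.sum_le_sum fun j _ => mul_le_mul_of_nonneg_right (hMN i j) (hv j)

lemma smul_norm_le_mulVec_norm {M : Matrix ι ι ℝ} (hM : ∀ i j, 0 ≤ M i j) {v : ι → ℂ} {z : ℂ}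
    (hv : M.map Complex.ofReal *ᵥ v = z • v) :
    ‖z‖ • (fun i => ‖v i‖) ≤ M *ᵥ fun i => ‖v i‖ := by
  intro i
  calc ‖z‖ * ‖v i‖ = ‖∑ j, (M i j : ℂ) * v j‖ := by
        rw [← norm_mul, ← smul_eq_mul, ← Pi.smul_apply, ← hv]; rfl
    _ ≤ ∑ j, ‖(M i j : ℂ) * v j‖ := norm_sum_le _ _
    _ = (M *ᵥ fun i => ‖v i‖) i := by
        simp only [norm_mul, Complex.norm_real, Real.norm_of_nonneg (hM i _)]; rfl

end NonnegativeMatrix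

section SpectralRadius

variable {ι : Type*} [Fintype ι] [DecidableEq ι]

lemma specRad_nonneg (M : Matrix ι ι ℝ) : 0 ≤ specRad M :=
  Real.sSup_nonneg (by rintro _ ⟨z, -, rfl⟩; exact norm_nonneg z)

lemma norm_le_specRad {M : Matrix ι ι ℝ} {z : ℂ}
    (hz : z ∈ spectrum ℂ (M.map Complex.ofReal)) : ‖z‖ ≤ specRad M :=
  le_csSup ((Matrix.finite_spectrum _).image _).bddAbove ⟨z, hz, rfl⟩

lemma specRad_le {M : Matrix ι ι ℝ} {θ : ℝ} (hθ : 0 ≤ θ)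
    (h : ∀ z ∈ spectrum ℂ (M.map Complex.ofReal), ‖z‖ ≤ θ) : specRad M ≤ θ :=
  Real.sSup_le (by rintro _ ⟨z, hz, rfl⟩; exact h z hz) hθ

lemma Matrix.exists_mulVec_eq_smul_of_mem_spectrum {K : Type*} [Field K] {M : Matrix ι ι K}
    {z : K} (hz : z ∈ spectrum K M) : ∃ v ≠ 0, M *ᵥ v = z • v := by
  rw [← Matrix.spectrum_toLin', ← Module.End.hasEigenvalue_iff_mem_spectrum] at hz
  obtain ⟨v, hv⟩ := hz.exists_hasEigenvector
  exact ⟨v, hv.2, hv.apply_eq_smul⟩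

lemma specRad_le_of_mulVec_le {M : Matrix ι ι ℝ} {x : ι → ℝ} {θ : ℝ} (hM : ∀ i j, 0 ≤ M i j)
    (hx : ∀ i, 0 < x i) (hθ : 0 ≤ θ) (hMx : M *ᵥ x ≤ θ • x) : specRad M ≤ θ := by
  refine specRad_le hθ fun z hz => ?_
  obtain ⟨v, hv0, hv⟩ := Matrix.exists_mulVec_eq_smul_of_mem_spectrum hz
  set g : ι → ℝ := fun i => ‖v i‖
  obtain ⟨i, hi⟩ := Function.ne_iff.mp hv0
  obtain ⟨i₀, -, hi₀⟩ := Finset.exists_max_image Finset.univ (fun i => g i / x i) ⟨i, by simp⟩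
  set c := g i₀ / x i₀ with hc
  have hgc : g ≤ c • x := fun j => (div_le_iff₀ (hx j)).1 (hi₀ j (Finset.mem_univ j))
  have hgi₀ : 0 < g i₀ := by
    have hc : 0 < c := pos_of_mul_pos_left ((norm_pos_iff.2 hi).trans_le (hgc i)) (hx i).le
    exact (div_pos_iff_of_pos_right (hx i₀)).1 hc
  have key : ‖z‖ * g i₀ ≤ θ * g i₀ :=
    calc ‖z‖ * g i₀ ≤ (M *ᵥ g) i₀ := smul_norm_le_mulVec_norm hM hv i₀
      _ ≤ (M *ᵥ (c • x)) i₀ := Matrix.mulVec_mono_of_nonneg hM hgc i₀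
      _ = c * (M *ᵥ x) i₀ := by rw [Matrix.mulVec_smul]; rfl
      _ ≤ c * (θ * x i₀) := mul_le_mul_of_nonneg_left (hMx i₀) (div_pos hgi₀ (hx i₀)).le
      _ = θ * g i₀ := by rw [mul_left_comm, hc, div_mul_cancel₀ _ (hx i₀).ne']
  exact le_of_mul_le_mul_right key hgi₀

-- Gelfand's formula needs a Banach algebra structure on complex matrices; any norm will do.
attribute [local instance] Matrix.linftyOpNormedRing Matrix.linftyOpNormedAlgebra

lemma Matrix.linfty_opNorm_map_ofReal (M : Matrix ι ι ℝ) : ‖M.map Complex.ofReal‖ = ‖M‖ := by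
  simp [Matrix.linfty_opNorm_def]

lemma le_specRad_of_smul_le_mulVec {M : Matrix ι ι ℝ} {u : ι → ℝ} {μ : ℝ}
    (hM : ∀ i j, 0 ≤ M i j) (hu : 0 ≤ u) (hu0 : u ≠ 0) (hμ : 0 ≤ μ) (hMu : μ • u ≤ M *ᵥ u) :
    μ ≤ specRad M := by
  have hpow : ∀ k : ℕ, μ ^ k • u ≤ M ^ k *ᵥ u := by
    intro k
    induction k with
    | zero => simp
    | succ k ih =>
      calc μ ^ (k + 1) • u = μ ^ k • (μ • u) := by rw [pow_succ, mul_smul]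
        _ ≤ μ ^ k • (M *ᵥ u) := smul_le_smul_of_nonneg_left hMu (pow_nonneg hμ k)
        _ = M *ᵥ (μ ^ k • u) := (Matrix.mulVec_smul _ _ _).symm
        _ ≤ M *ᵥ (M ^ k *ᵥ u) := Matrix.mulVec_mono_of_nonneg hM ih
        _ = M ^ (k + 1) *ᵥ u := by rw [Matrix.mulVec_mulVec, pow_succ']
  have hnorm : ∀ k : ℕ, μ ^ k ≤ ‖M.map Complex.ofReal ^ k‖ := by
    intro k
    have hμu : 0 ≤ μ ^ k • u := smul_nonneg (pow_nonneg hμ k) hu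
    refine le_of_mul_le_mul_right ?_ (norm_pos_iff.2 hu0)
    calc μ ^ k * ‖u‖ = ‖μ ^ k • u‖ := by rw [norm_smul, Real.norm_of_nonneg (pow_nonneg hμ k)]
      _ ≤ ‖M ^ k *ᵥ u‖ := (pi_norm_le_iff_of_nonneg (norm_nonneg _)).2 fun i =>
          (Real.norm_of_nonneg (hμu i)).trans_le <| (hpow k i).trans <|
            (Real.le_norm_self _).trans (norm_le_pi_norm _ i)
      _ ≤ ‖M ^ k‖ * ‖u‖ := Matrix.linfty_opNorm_mulVec _ _
      _ = ‖M.map Complex.ofReal ^ k‖ * ‖u‖ := by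
          rw [← Matrix.linfty_opNorm_map_ofReal]; congr 2; exact M.map_pow Complex.ofRealHom k
  have hρ : spectralRadius ℂ (M.map Complex.ofReal) ≤ ENNReal.ofReal (specRad M) :=
    iSup₂_le fun z hz => by
      rw [← ENNReal.ofReal_coe_nnreal, coe_nnnorm]
      exact ENNReal.ofReal_le_ofReal (norm_le_specRad hz)
  have hlim : ENNReal.ofReal μ ≤ spectralRadius ℂ (M.map Complex.ofReal) := by
    refine ge_of_tendsto (spectrum.pow_norm_pow_one_div_tendsto_nhds_spectralRadius _) ?_
    filter_upwards [Filter.eventually_ne_atTop 0] with k hk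
    refine ENNReal.ofReal_le_ofReal ?_
    calc μ = (μ ^ k) ^ (1 / k : ℝ) := by rw [one_div, Real.pow_rpow_inv_natCast hμ hk]
      _ ≤ _ := Real.rpow_le_rpow (pow_nonneg hμ k) (hnorm k) (by positivity)
  exact (ENNReal.ofReal_le_ofReal_iff (specRad_nonneg M)).1 (hlim.trans hρ)

end SpectralRadius

section Companion

variable {ι : Type*} [DecidableEq ι]

lemma Matrix.fromBlocks_one_zero_mulVec [Fintype ι] {R : Type*} [Semiring R]
    (B C : Matrix ι ι R) (x y : ι → R) :
    Matrix.fromBlocks B C 1 0 *ᵥ Sum.elim x y = Sum.elim (B *ᵥ x + C *ᵥ y) x := by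
  simp [Matrix.fromBlocks_mulVec]

variable {B C : Matrix ι ι ℝ}

lemma Matrix.fromBlocks_one_zero_nonneg (hB : ∀ i j, 0 ≤ B i j) (hC : ∀ i j, 0 ≤ C i j) :
    ∀ i j, 0 ≤ Matrix.fromBlocks B C (1 : Matrix ι ι ℝ) 0 i j := by
  rintro (i | i) (j | j)
  · exact hB i j
  · exact hC i j
  · simp only [Matrix.fromBlocks_apply₂₁, Matrix.one_apply]; positivity
  · exact le_rfl

variable [Fintype ι]

lemma specRad_fromBlocks_le (hB : ∀ i j, 0 ≤ B i j) (hC : ∀ i j, 0 ≤ C i j) {y : ι → ℝ}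
    {θ : ℝ} (hy : ∀ i, 0 < y i) (hθ : 0 < θ) (hθ1 : θ ≤ 1) (hBC : (B + C) *ᵥ y ≤ θ ^ 2 • y) :
    specRad (Matrix.fromBlocks B C 1 0) ≤ θ := by
  refine specRad_le_of_mulVec_le (Matrix.fromBlocks_one_zero_nonneg hB hC)
    (x := Sum.elim (θ • y) y) (by rintro (i | i) <;> simp [hy, hθ]) hθ.le ?_
  rw [Matrix.fromBlocks_one_zero_mulVec]
  rintro (i | i)
  · have hBy : 0 ≤ (B *ᵥ y) i := Matrix.mulVec_nonneg_of_nonneg hB (fun j => (hy j).le) i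
    have h := hBC i
    simp only [Matrix.add_mulVec, Matrix.mulVec_smul, Pi.add_apply, Pi.smul_apply,
      smul_eq_mul, Sum.elim_inl] at h ⊢
    nlinarith [mul_nonneg (sub_nonneg.2 hθ1) hBy]
  · simp

lemma specRad_fromBlocks_lt_one (hB : ∀ i j, 0 ≤ B i j) (hC : ∀ i j, 0 ≤ C i j) {y : ι → ℝ}
    (hy : ∀ i, 0 < y i) (hBC : ∀ i, ((B + C) *ᵥ y) i < y i) :
    specRad (Matrix.fromBlocks B C 1 0) < 1 := by
  set α := (insert 0 (Finset.univ.image fun i => ((B + C) *ᵥ y) i / y i)).max'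
    (Finset.insert_nonempty _ _)
  have hα0 : 0 ≤ α := Finset.le_max' _ _ (Finset.mem_insert_self _ _)
  have hα1 : α < 1 := (Finset.max'_lt_iff _ _).2 (by simp [div_lt_one, hy, hBC])
  have hBCα : (B + C) *ᵥ y ≤ α • y := fun i =>
    (div_le_iff₀ (hy i)).1 (Finset.le_max' _ _ (by simp))
  -- `α ≤ ((1 + α) / 2) ^ 2` by AM-GM
  calc specRad _ ≤ (1 + α) / 2 := specRad_fromBlocks_le hB hC hy (by linarith) (by linarith)
        (hBCα.trans fun i => mul_le_mul_of_nonneg_right (by nlinarith) (hy i).le)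
    _ < 1 := by linarith

lemma norm_eq_sum_elim_of_fromBlocks_mulVec {v : ι ⊕ ι → ℂ} {z : ℂ}
    (hv : (Matrix.fromBlocks B C 1 0).map Complex.ofReal *ᵥ v = z • v) :
    (fun i => ‖v i‖) = Sum.elim (‖z‖ • fun i => ‖v (Sum.inr i)‖) fun i => ‖v (Sum.inr i)‖ := by
  rw [← Sum.elim_comp_inl_inr v, Matrix.fromBlocks_map, Matrix.map_one _ Complex.ofReal_zero
    Complex.ofReal_one, Matrix.map_zero _ Complex.ofReal_zero,
    Matrix.fromBlocks_one_zero_mulVec] at hv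
  funext i
  cases i with
  | inl i =>
    have hi := congrFun hv (Sum.inr i)
    simp only [Sum.elim_inr, Pi.smul_apply, Function.comp_apply, smul_eq_mul] at hi
    simp [hi]
  | inr i => rfl

lemma specRad_fromBlocks_le_specRad_fromBlocks {B' C' : Matrix ι ι ℝ} (hB : ∀ i j, 0 ≤ B i j)
    (hC' : ∀ i j, 0 ≤ C' i j) (hBB' : ∀ i j, B i j ≤ B' i j)
    (hsum : ∀ i j, (B' + C') i j ≤ (B + C) i j) (h1 : specRad (Matrix.fromBlocks B' C' 1 0) ≤ 1) :
    specRad (Matrix.fromBlocks B' C' 1 0) ≤ specRad (Matrix.fromBlocks B C 1 0) := by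
  have hB' i j : 0 ≤ B' i j := (hB i j).trans (hBB' i j)
  have hC i j : 0 ≤ C i j := by
    have := hsum i j
    simp only [Matrix.add_apply] at this
    linarith [hBB' i j, hC' i j]
  refine specRad_le (specRad_nonneg _) fun z hz => ?_
  obtain ⟨v, hv0, hv⟩ := Matrix.exists_mulVec_eq_smul_of_mem_spectrum hz
  set u : ι → ℝ := fun i => ‖v (Sum.inr i)‖
  have hsub := smul_norm_le_mulVec_norm (Matrix.fromBlocks_one_zero_nonneg hB' hC') hv
  have hw : (fun i => ‖v i‖) = Sum.elim (‖z‖ • u) u := norm_eq_sum_elim_of_fromBlocks_mulVec hv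
  have hu : 0 ≤ u := fun i => norm_nonneg _
  have hw0 : (fun i => ‖v i‖) ≠ 0 := fun h => hv0 (funext fun i => norm_eq_zero.1 (congrFun h i))
  have hz1 : ‖z‖ ≤ 1 := (norm_le_specRad hz).trans h1
  refine le_specRad_of_smul_le_mulVec (Matrix.fromBlocks_one_zero_nonneg hB hC)
    (fun i => norm_nonneg _) hw0 (norm_nonneg z) (hsub.trans ?_)
  rw [hw, Matrix.fromBlocks_one_zero_mulVec, Matrix.fromBlocks_one_zero_mulVec]
  rintro (i | i)
  · have hBu := Matrix.mulVec_le_mulVec_of_le hBB' hu i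
    have hsumu := Matrix.mulVec_le_mulVec_of_le hsum hu i
    simp only [Matrix.add_mulVec, Matrix.mulVec_smul, Pi.add_apply, Pi.smul_apply, smul_eq_mul,
      Sum.elim_inl] at hsumu ⊢
    nlinarith [mul_nonneg (sub_nonneg.2 hz1) (sub_nonneg.2 hBu)]
  · exact le_rfl

end Companion

section InnerInverse

variable {α : Type*} [CommRing α] {l m n : Type*} [Fintype m] [Fintype n]

lemma Matrix.mul_mul_eq_of_ker_le {P : Matrix m n α} {X : Matrix n m α} {M : Matrix l n α}
    (hPX : P * X * P = P) (h : ker P.mulVecLin ≤ ker M.mulVecLin) : M * X * P = M := by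
  refine Matrix.ext_iff_mulVec.2 fun v => ?_
  have hv : v - X *ᵥ (P *ᵥ v) ∈ ker M.mulVecLin :=
    h (by simp [Matrix.mulVec_sub, Matrix.mulVec_mulVec, ← Matrix.mul_assoc, hPX])
  simpa [Matrix.mulVec_sub, Matrix.mulVec_mulVec, Matrix.mul_assoc, sub_eq_zero, eq_comm] using hv

lemma Matrix.mul_mul_eq_of_range_le [Fintype l] {P : Matrix m n α} {X : Matrix n m α}
    {M : Matrix m l α} (hPX : P * X * P = P) (h : range M.mulVecLin ≤ range P.mulVecLin) :
    P * X * M = M := by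
  refine Matrix.ext_iff_mulVec.2 fun v => ?_
  obtain ⟨w, hw⟩ := h ⟨v, rfl⟩
  simp only [Matrix.mulVecLin_apply] at hw
  rw [← Matrix.mulVec_mulVec, ← hw, Matrix.mulVec_mulVec, hPX]

lemma Matrix.sub_one_sub_mul_mul_eq [DecidableEq m] {A P₁ R₁ S₁ P₂ R₂ S₂ : Matrix m n α}
    {X₁ : Matrix n m α} (h₁ : A = P₁ - R₁ + S₁) (h₂ : A = P₂ - R₂ + S₂) (hS : S₂ * X₁ * P₁ = S₂) :
    P₂ - (1 - S₂ * X₁) * A = R₂ - S₂ * X₁ * R₁ + S₂ * X₁ * S₁ := by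
  calc _ = P₂ - A + S₂ * X₁ * A := by rw [Matrix.sub_mul, Matrix.one_mul]; abel
    _ = _ := by nth_rw 1 [h₂]; rw [h₁, Matrix.mul_add, Matrix.mul_sub, hS]; abel

lemma Matrix.sub_one_add_mul_mul_eq [DecidableEq m] {A P₁ R₁ S₁ P₂ R₂ S₂ : Matrix m n α}
    {X₁ : Matrix n m α} (h₁ : A = P₁ - R₁ + S₁) (h₂ : A = P₂ - R₂ + S₂) (hR : R₂ * X₁ * P₁ = R₂) :
    P₂ - (1 + R₂ * X₁) * A = R₂ * X₁ * R₁ - S₂ - R₂ * X₁ * S₁ := by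
  calc _ = P₂ - A - R₂ * X₁ * A := by rw [Matrix.add_mul, Matrix.one_mul]; abel
    _ = _ := by nth_rw 1 [h₂]; rw [h₁, Matrix.mul_add, Matrix.mul_sub, hR]; abel

end InnerInverse

section Subspaces

variable {α : Type*} [CommRing α] {m n : Type*} [Fintype n] {A P R S : Matrix m n α}

lemma Matrix.ker_le_ker_of_eq_sub_add (h : A = P - R + S) (hP : ker A.mulVecLin ≤ ker P.mulVecLin)
    (hS : ker A.mulVecLin ≤ ker S.mulVecLin) : ker A.mulVecLin ≤ ker R.mulVecLin := by
  intro v hv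
  have hR : R = P + S - A := by rw [h]; abel
  have hPv : P *ᵥ v = 0 := hP hv
  have hSv : S *ᵥ v = 0 := hS hv
  have hAv : A *ᵥ v = 0 := hv
  show R *ᵥ v = 0
  rw [hR, Matrix.sub_mulVec, Matrix.add_mulVec, hPv, hSv, hAv, add_zero, sub_zero]

lemma Matrix.range_le_range_of_eq_sub_add (h : A = P - R + S)
    (hP : range P.mulVecLin ≤ range A.mulVecLin) (hS : range S.mulVecLin ≤ range A.mulVecLin) :
    range R.mulVecLin ≤ range A.mulVecLin := by
  rintro _ ⟨v, rfl⟩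
  have hR : R = P + S - A := by rw [h]; abel
  rw [Matrix.mulVecLin_apply, hR, Matrix.sub_mulVec, Matrix.add_mulVec]
  exact sub_mem (add_mem (hP ⟨v, rfl⟩) (hS ⟨v, rfl⟩)) ⟨v, rfl⟩

end Subspaces

section LeftMultiplication

variable {K : Type*} [Field K] {m n : Type*} [Fintype m] [DecidableEq m] [Fintype n]
  {U : Matrix m m K} {A : Matrix m n K}

lemma Matrix.ker_mulVecLin_mul_of_isUnit (hU : IsUnit U) :
    ker (U * A).mulVecLin = ker A.mulVecLin := by
  rw [Matrix.mulVecLin_mul, LinearMap.ker_comp_of_ker_eq_bot _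
    (LinearMap.ker_eq_bot.2 (Matrix.mulVec_injective_iff_isUnit.2 hU))]

lemma Matrix.range_mulVecLin_mul_of_isUnit (hU : IsUnit U)
    (h : ∀ v, U *ᵥ v - v ∈ range A.mulVecLin) : range (U * A).mulVecLin = range A.mulVecLin := by
  refine Submodule.eq_of_le_of_finrank_eq ?_
    (Matrix.rank_mul_eq_right_of_isUnit_det U A ((Matrix.isUnit_iff_isUnit_det U).1 hU))
  rintro _ ⟨v, rfl⟩
  rw [Matrix.mulVecLin_apply, ← Matrix.mulVec_mulVec, ← add_sub_cancel (A *ᵥ v) (U *ᵥ _)]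
  exact add_mem ⟨v, rfl⟩ (h _)

end LeftMultiplication

section MoorePenrose

variable {m n : ℕ} {P Q : Matrix (Fin m) (Fin n) ℝ} {X Y : Matrix (Fin n) (Fin m) ℝ}

lemma IsMP.pinv_mul_eq_of_ker_eq (hP : IsMP P X) (hQ : IsMP Q Y)
    (h : ker P.mulVecLin = ker Q.mulVecLin) : X * P = Y * Q := by
  have hQXP : Q * X * P = Q := Matrix.mul_mul_eq_of_ker_le hP.1 h.le
  have hPYQ : P * Y * Q = P := Matrix.mul_mul_eq_of_ker_le hQ.1 h.ge
  calc X * P = (X * P)ᵀ := hP.2.2.2.symm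
    _ = (X * P * (Y * Q))ᵀ := by simp only [Matrix.mul_assoc] at hPYQ ⊢; rw [hPYQ]
    _ = Y * Q * (X * P) := by rw [Matrix.transpose_mul, hP.2.2.2, hQ.2.2.2]
    _ = Y * Q := by simp only [Matrix.mul_assoc] at hQXP ⊢; rw [hQXP]

lemma IsMP.mul_pinv_eq_of_range_eq (hP : IsMP P X) (hQ : IsMP Q Y)
    (h : range P.mulVecLin = range Q.mulVecLin) : P * X = Q * Y := by
  have hPXQ : P * X * Q = Q := Matrix.mul_mul_eq_of_range_le hP.1 h.ge
  have hQYP : Q * Y * P = P := Matrix.mul_mul_eq_of_range_le hQ.1 h.le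
  calc P * X = (P * X)ᵀ := hP.2.2.1.symm
    _ = (Q * Y * (P * X))ᵀ := by rw [← Matrix.mul_assoc, hQYP]
    _ = P * X * (Q * Y) := by rw [Matrix.transpose_mul, hP.2.2.1, hQ.2.2.1]
    _ = Q * Y := by rw [← Matrix.mul_assoc, hPXQ]

lemma IsMP.pinv_mul_sub_mul_pinv (hP : IsMP P X) (hQ : IsMP Q Y)
    (hker : ker P.mulVecLin = ker Q.mulVecLin) (hrange : range P.mulVecLin = range Q.mulVecLin) :
    X * (P - Q) * Y = Y - X := by
  rw [Matrix.mul_sub, Matrix.sub_mul, hP.pinv_mul_eq_of_ker_eq hQ hker, hQ.2.1, Matrix.mul_assoc,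
    ← hP.mul_pinv_eq_of_range_eq hQ hrange, ← Matrix.mul_assoc, hP.2.1]

end MoorePenrose

section Nonnegativity

variable {l m n : ℕ}

lemma MatLE.add_nonneg {A B : Matrix (Fin m) (Fin n) ℝ} (hA : MatLE 0 A) (hB : MatLE 0 B) :
    MatLE 0 (A + B) :=
  fun i j => _root_.add_nonneg (hA i j) (hB i j)

lemma MatLE.mul_nonneg {A : Matrix (Fin m) (Fin l) ℝ} {B : Matrix (Fin l) (Fin n) ℝ}
    (hA : MatLE 0 A) (hB : MatLE 0 B) : MatLE 0 (A * B) := fun i j => by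
  rw [Matrix.mul_apply]
  exact Finset.sum_nonneg fun k _ => _root_.mul_nonneg (hA i k) (hB k j)

lemma MatLE.neg_nonneg {A : Matrix (Fin m) (Fin n) ℝ} (hA : MatLE A 0) : MatLE 0 (-A) :=
  fun i j => _root_.neg_nonneg.2 (hA i j)

variable {R₁ S₁ R₂ S₂ : Matrix (Fin m) (Fin n) ℝ} {X₁ X₂ : Matrix (Fin n) (Fin m) ℝ}

lemma tgads_nonneg (hX₂ : MatLE 0 X₂) (hR₂ : MatLE 0 R₂) (hS₂ : MatLE S₂ 0)
    (hR₁ : MatLE 0 (X₁ * R₁)) (hS₁ : MatLE (X₁ * S₁) 0) :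
    MatLE 0 (R₂ - S₂ * X₁ * R₁ + S₂ * X₁ * S₁) ∧ MatLE 0 (X₂ * R₂ - X₂ * S₂ * X₁ * R₁) ∧
      MatLE 0 (X₂ * S₂ * X₁ * S₁) := by
  refine ⟨?_, ?_, ?_⟩
  · simpa [sub_eq_add_neg, Matrix.mul_assoc] using
      (hR₂.add_nonneg (hS₂.neg_nonneg.mul_nonneg hR₁)).add_nonneg
        (hS₂.neg_nonneg.mul_nonneg hS₁.neg_nonneg)
  · simpa [sub_eq_add_neg, Matrix.mul_assoc] using
      (hX₂.mul_nonneg hR₂).add_nonneg ((hX₂.mul_nonneg hS₂.neg_nonneg).mul_nonneg hR₁)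
  · simpa [Matrix.mul_assoc] using (hX₂.mul_nonneg hS₂.neg_nonneg).mul_nonneg hS₁.neg_nonneg

lemma htads_nonneg (hX₂ : MatLE 0 X₂) (hR₂ : MatLE 0 R₂) (hS₂ : MatLE S₂ 0)
    (hR₁ : MatLE 0 (X₁ * R₁)) (hS₁ : MatLE (X₁ * S₁) 0) :
    MatLE 0 (R₂ * X₁ * R₁ - S₂ - R₂ * X₁ * S₁) ∧ MatLE 0 (X₂ * R₂ * X₁ * R₁ - X₂ * S₂) ∧
      MatLE 0 (-(X₂ * R₂ * X₁ * S₁)) := by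
  refine ⟨?_, ?_, ?_⟩
  · simpa [sub_eq_add_neg, Matrix.mul_assoc] using
      ((hR₂.mul_nonneg hR₁).add_nonneg hS₂.neg_nonneg).add_nonneg (hR₂.mul_nonneg hS₁.neg_nonneg)
  · simpa [sub_eq_add_neg, Matrix.mul_assoc] using
      ((hX₂.mul_nonneg hR₂).mul_nonneg hR₁).add_nonneg (hX₂.mul_nonneg hS₂.neg_nonneg)
  · simpa [Matrix.mul_assoc] using (hX₂.mul_nonneg hR₂).mul_nonneg hS₁.neg_nonneg

end Nonnegativity

lemma specRad_fromBlocks_lt_one_of_splitting {m n : ℕ} {P Q : Matrix (Fin m) (Fin n) ℝ}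
    {X Y : Matrix (Fin n) (Fin m) ℝ} {B C : Matrix (Fin n) (Fin n) ℝ} (hP : IsMP P X)
    (hQ : IsMP Q Y) (hker : ker P.mulVecLin = ker Q.mulVecLin)
    (hrange : range P.mulVecLin = range Q.mulVecLin) (hY : MatLE 0 Y) (hPQ : MatLE 0 (P - Q))
    (hB : MatLE 0 B) (hC : MatLE 0 C) (hBC : B + C = X * (P - Q)) :
    specRad (Matrix.fromBlocks B C 1 0) < 1 := by
  set y : Fin n → ℝ := (1 + Y * (P - Q)) *ᵥ fun _ => 1
  have hy : ∀ i, 1 ≤ y i := fun i => by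
    have := Matrix.mulVec_nonneg_of_nonneg (hY.mul_nonneg hPQ) (fun _ => zero_le_one) i
    simpa [y, Matrix.add_mulVec] using this
  have hinv : (1 - X * (P - Q)) * (1 + Y * (P - Q)) = 1 := by
    rw [Matrix.sub_mul, Matrix.one_mul, Matrix.mul_add, Matrix.mul_one,
      ← Matrix.mul_assoc (X * (P - Q)) Y, hP.pinv_mul_sub_mul_pinv hQ hker hrange, Matrix.sub_mul]
    abel
  refine specRad_fromBlocks_lt_one hB hC (fun i => one_pos.trans_le (hy i)) fun i => ?_
  have h : (1 - X * (P - Q)) *ᵥ y = fun _ => 1 := by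
    rw [Matrix.mulVec_mulVec, hinv, Matrix.one_mulVec]
  have hi := congrFun h i
  rw [Matrix.sub_mulVec, Matrix.one_mulVec, Pi.sub_apply] at hi
  rw [hBC]
  linarith

lemma specRad_fromBlocks_lt_one_of_mul_splitting {m n : ℕ} {A P : Matrix (Fin m) (Fin n) ℝ}
    {U : Matrix (Fin m) (Fin m) ℝ} {X Y : Matrix (Fin n) (Fin m) ℝ} {B C : Matrix (Fin n) (Fin n) ℝ}
    (hP : IsMP P X) (hker : ker P.mulVecLin = ker A.mulVecLin)
    (hrange : range P.mulVecLin = range A.mulVecLin) (hU : IsUnit U)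
    (hUA : ∀ v, U *ᵥ v - v ∈ range A.mulVecLin) (hQ : IsMP (U * A) Y) (hY : MatLE 0 Y)
    (hN : MatLE 0 (P - U * A)) (hB : MatLE 0 B) (hC : MatLE 0 C) (hBC : B + C = X * (P - U * A)) :
    specRad (Matrix.fromBlocks B C 1 0) < 1 :=
  specRad_fromBlocks_lt_one_of_splitting hP hQ
    (hker.trans (Matrix.ker_mulVecLin_mul_of_isUnit hU).symm)
    (hrange.trans (Matrix.range_mulVecLin_mul_of_isUnit hU hUA).symm) hY hN hB hC hBC

theorem htads_vs_tgads_comparison_general {m n : ℕ}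
    (A P₁ R₁ S₁ P₂ R₂ S₂ : Matrix (Fin m) (Fin n) ℝ)
    (X₁ X₂ Xhat Xcal : Matrix (Fin n) (Fin m) ℝ)
    (hX₁ : IsMP P₁ X₁)
    (hX₂ : IsMP P₂ X₂)
    (hsplit₁ : A = P₁ - R₁ + S₁)
    (hker₁ : LinearMap.ker (P₁).mulVecLin = LinearMap.ker (A).mulVecLin)
    (hwr₁b : MatLE 0 (X₁ * R₁))
    (hwr₁c : MatLE (X₁ * S₁) 0)
    (hsplit₂ : A = P₂ - R₂ + S₂)
    (hrange₂ : LinearMap.range (P₂).mulVecLin = LinearMap.range (A).mulVecLin)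
    (hker₂ : LinearMap.ker (P₂).mulVecLin = LinearMap.ker (A).mulVecLin)
    (hreg₂a : MatLE 0 X₂)
    (hreg₂b : MatLE 0 R₂)
    (hreg₂c : MatLE S₂ 0)
    (hNS : LinearMap.ker (S₂).mulVecLin = LinearMap.ker (P₂).mulVecLin)
    (hRS : LinearMap.range (S₂).mulVecLin = LinearMap.range (P₂).mulVecLin)
    (hunitS : IsUnit (1 - S₂ * X₁))
    (hunitR : IsUnit (1 + R₂ * X₁))
    (hXhat : IsMP ((1 - S₂ * X₁) * A) Xhat)
    (hXhatpos : MatLE 0 Xhat)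
    (hXcal : IsMP ((1 + R₂ * X₁) * A) Xcal)
    (hXcalpos : MatLE 0 Xcal)
    (hc1 : MatLE (X₂ * (R₂ - S₂ * X₁ * R₁)) (X₂ * (R₂ * X₁ * R₁ - S₂)))
    (hc2 : MatLE (X₂ * ((1 - S₂ * X₁) * A)) (X₂ * ((1 + R₂ * X₁) * A)))
    : specRad (Matrix.fromBlocks (X₂ * R₂ * X₁ * R₁ - X₂ * S₂) (-(X₂ * R₂ * X₁ * S₁)) 1 0) ≤ specRad (Matrix.fromBlocks (X₂ * R₂ - X₂ * S₂ * X₁ * R₁) (X₂ * S₂ * X₁ * S₁) 1 0) ∧ specRad (Matrix.fromBlocks (X₂ * R₂ - X₂ * S₂ * X₁ * R₁) (X₂ * S₂ * X₁ * S₁) 1 0) < 1 := by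
  have hkerS : ker A.mulVecLin ≤ ker S₂.mulVecLin := (hNS.trans hker₂).ge
  have hrangeS : range S₂.mulVecLin ≤ range A.mulVecLin := (hRS.trans hrange₂).le
  have hkerR := Matrix.ker_le_ker_of_eq_sub_add hsplit₂ hker₂.ge hkerS
  have hrangeR := Matrix.range_le_range_of_eq_sub_add hsplit₂ hrange₂.le hrangeS
  have hAhat := Matrix.sub_one_sub_mul_mul_eq hsplit₁ hsplit₂
    (Matrix.mul_mul_eq_of_ker_le hX₁.1 (hker₁.trans_le hkerS))
  have hAcal := Matrix.sub_one_add_mul_mul_eq hsplit₁ hsplit₂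
    (Matrix.mul_mul_eq_of_ker_le hX₁.1 (hker₁.trans_le hkerR))
  obtain ⟨hNhat, hB, hC⟩ := tgads_nonneg hreg₂a hreg₂b hreg₂c hwr₁b hwr₁c
  obtain ⟨hNcal, hB', hC'⟩ := htads_nonneg hreg₂a hreg₂b hreg₂c hwr₁b hwr₁c
  have hBC : X₂ * R₂ - X₂ * S₂ * X₁ * R₁ + X₂ * S₂ * X₁ * S₁ = X₂ * (P₂ - (1 - S₂ * X₁) * A) := by
    simp only [hAhat, Matrix.mul_add, Matrix.mul_sub, Matrix.mul_assoc]
  have hBC' : X₂ * R₂ * X₁ * R₁ - X₂ * S₂ + -(X₂ * R₂ * X₁ * S₁) =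
      X₂ * (P₂ - (1 + R₂ * X₁) * A) := by
    simp only [hAcal, Matrix.mul_sub, Matrix.mul_assoc, ← sub_eq_add_neg]
  have hW := specRad_fromBlocks_lt_one_of_mul_splitting hX₂ hker₂ hrange₂ hunitS
    (fun v => by simpa [Matrix.sub_mulVec, ← Matrix.mulVec_mulVec] using hrangeS ⟨X₁ *ᵥ v, rfl⟩)
    hXhat hXhatpos (hAhat ▸ hNhat) hB hC hBC
  have hW' := specRad_fromBlocks_lt_one_of_mul_splitting hX₂ hker₂ hrange₂ hunitR
    (fun v => by simpa [Matrix.add_mulVec, ← Matrix.mulVec_mulVec] using hrangeR ⟨X₁ *ᵥ v, rfl⟩)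
    hXcal hXcalpos (hAcal ▸ hNcal) hB' hC' hBC'
  refine ⟨specRad_fromBlocks_le_specRad_fromBlocks hB hC' (fun i j => ?_) (fun i j => ?_)
    hW'.le, hW⟩
  · simpa [Matrix.mul_sub, Matrix.mul_assoc] using hc1 i j
  · rw [hBC, hBC', Matrix.mul_sub, Matrix.mul_sub, Matrix.sub_apply, Matrix.sub_apply]
    linarith [hc2 i j]

theorem htads_vs_tgads_comparison {m n : ℕ}
    (A P₁ R₁ S₁ P₂ R₂ S₂ : Matrix (Fin m) (Fin n) ℝ)
    (XA X₁ X₂ Xhat Xcal : Matrix (Fin n) (Fin m) ℝ)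
    (hX₁ : IsMP P₁ X₁)
    (hX₂ : IsMP P₂ X₂)
    (hXA : IsMP A XA)
    (hsemi : MatLE 0 XA)
    (hsplit₁ : A = P₁ - R₁ + S₁)
    (hrange₁ : LinearMap.range (P₁).mulVecLin = LinearMap.range (A).mulVecLin)
    (hker₁ : LinearMap.ker (P₁).mulVecLin = LinearMap.ker (A).mulVecLin)
    (hwr₁a : MatLE 0 X₁)
    (hwr₁b : MatLE 0 (X₁ * R₁))
    (hwr₁c : MatLE (X₁ * S₁) 0)
    (hsplit₂ : A = P₂ - R₂ + S₂)
    (hrange₂ : LinearMap.range (P₂).mulVecLin = LinearMap.range (A).mulVecLin)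
    (hker₂ : LinearMap.ker (P₂).mulVecLin = LinearMap.ker (A).mulVecLin)
    (hreg₂a : MatLE 0 X₂)
    (hreg₂b : MatLE 0 R₂)
    (hreg₂c : MatLE S₂ 0)
    (hNS : LinearMap.ker (S₂).mulVecLin = LinearMap.ker (P₂).mulVecLin)
    (hRS : LinearMap.range (S₂).mulVecLin = LinearMap.range (P₂).mulVecLin)
    (hunitS : IsUnit (1 - S₂ * X₁))
    (hunitR : IsUnit (1 + R₂ * X₁))
    (hXhat : IsMP ((1 - S₂ * X₁) * A) Xhat)
    (hXhatpos : MatLE 0 Xhat)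
    (hXcal : IsMP ((1 + R₂ * X₁) * A) Xcal)
    (hXcalpos : MatLE 0 Xcal)
    (hc1 : MatLE (X₂ * (R₂ - S₂ * X₁ * R₁)) (X₂ * (R₂ * X₁ * R₁ - S₂)))
    (hc2 : MatLE (X₂ * ((1 - S₂ * X₁) * A)) (X₂ * ((1 + R₂ * X₁) * A)))
    : specRad (Matrix.fromBlocks (X₂ * R₂ * X₁ * R₁ - X₂ * S₂) (-(X₂ * R₂ * X₁ * S₁)) 1 0) ≤ specRad (Matrix.fromBlocks (X₂ * R₂ - X₂ * S₂ * X₁ * R₁) (X₂ * S₂ * X₁ * S₁) 1 0) ∧ specRad (Matrix.fromBlocks (X₂ * R₂ - X₂ * S₂ * X₁ * R₁) (X₂ * S₂ * X₁ * S₁) 1 0) < 1 :=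
  htads_vs_tgads_comparison_general A P₁ R₁ S₁ P₂ R₂ S₂ X₁ X₂ Xhat Xcal hX₁ hX₂ hsplit₁ hker₁ hwr₁b
    hwr₁c hsplit₂ hrange₂ hker₂ hreg₂a hreg₂b hreg₂c hNS hRS hunitS hunitR hXhat hXhatpos hXcal
    hXcalpos hc1 hc2
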